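/- arXiv:math/0411407 — 2 statements merged into one kernel-verified Lean document; each statement's English description precedes it below -/
import Mathlib

section
/- For N >= 2, the sequence a_n counting compositions of n with no part divisible by N satisfies the generalized Fibonacci recurrence a_n = a_{n-1} + a_{n-2} + ... + a_{n-N} for n > N, with a_0 = 1. -/
/-! Splitting off the first part `k` of a composition gives
`a_n = ∑_{1 ≤ k ≤ n, N ∤ k} a_{n-k}` for `n ≥ 1`. For `n > N` the terms with `k > N` are,
after the shift `k = j + N` (which preserves `N ∤ ·`), exactly this recursion for `a_{n-N}`;
of the terms with `k ≤ N` all but `k = N` survive. So `a_n = (a_{n-1} + ⋯ + a_{n-N+1}) + a_{n-N}`.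
-/

/-- `a N n` is the number of compositions of `n` with no part divisible by `N`. -/
def aComp (N n : ℕ) : ℕ :=
  ((Finset.univ : Finset (Composition n)).filter
    (fun c => ∀ p ∈ c.blocks, ¬ N ∣ p)).card

open Finset

namespace Composition

variable {n k : ℕ}

def dropHead (c : Composition n) (hk : c.blocks.head! = k) : Composition (n - k) where
  blocks := c.blocks.tail
  blocks_pos hi := c.blocks_pos (List.mem_of_mem_tail hi)
  blocks_sum := by
    subst hk
    obtain ⟨_ | ⟨b, t⟩, -, hsum⟩ := c
    · simp only [List.sum_nil, List.tail_nil, List.head!_nil, Nat.default_eq_zero] at hsum ⊢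
      omega
    · simp only [List.sum_cons, List.tail_cons, List.head!_cons] at hsum ⊢
      omega

def cons (c : Composition (n - k)) (hk : 0 < k) (hkn : k ≤ n) : Composition n where
  blocks := k :: c.blocks
  blocks_pos hi := (List.mem_cons.1 hi).elim (· ▸ hk) c.blocks_pos
  blocks_sum := by simp only [List.sum_cons, c.blocks_sum]; omega

variable (P : ℕ → Prop) [DecidablePred P]

theorem card_filter_forall_blocks_head!_eq (hk : 0 < k) (hkn : k ≤ n) (hPk : P k) :
    #{c : Composition n | (∀ p ∈ c.blocks, P p) ∧ c.blocks.head! = k} =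
      #{c : Composition (n - k) | ∀ p ∈ c.blocks, P p} := by
  refine card_bij' (fun c hc => c.dropHead (mem_filter.1 hc).2.2) (fun c _ => c.cons hk hkn)
    (fun c hc => ?_) (fun c hc => ?_) (fun c hc => ?_) (fun c _ => rfl)
  · simp only [mem_filter_univ] at hc ⊢
    exact fun p hp => hc.1 p (List.mem_of_mem_tail hp)
  · simp only [mem_filter_univ] at hc ⊢
    exact ⟨List.forall_mem_cons.2 ⟨hPk, hc⟩, rfl⟩
  · obtain ⟨-, hhead⟩ := (mem_filter_univ _).1 hc
    ext1
    change k :: c.blocks.tail = c.blocks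
    rw [← hhead]
    exact List.cons_head!_tail (c.blocks_eq_nil.not.2 (by omega))

theorem card_filter_forall_blocks_eq_sum (hn : 0 < n) :
    #{c : Composition n | ∀ p ∈ c.blocks, P p} =
      ∑ k ∈ Icc 1 n with P k, #{c : Composition (n - k) | ∀ p ∈ c.blocks, P p} := by
  have head!_mem (c : Composition n) : c.blocks.head! ∈ c.blocks :=
    List.head!_mem_self (c.blocks_eq_nil.not.2 hn.ne')
  rw [card_eq_sum_card_fiberwise (f := fun c => c.blocks.head!) (t := {k ∈ Icc 1 n | P k})]
  · refine sum_congr rfl fun k hk => ?_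
    rw [mem_filter, mem_Icc] at hk
    rw [filter_filter]
    exact card_filter_forall_blocks_head!_eq P hk.1.1 hk.1.2 hk.2
  · intro c hc
    simp only [coe_filter, mem_univ, true_and, Set.mem_ofPred_eq, mem_Icc] at hc ⊢
    exact ⟨⟨c.one_le_blocks (head!_mem c), c.blocks_le (head!_mem c)⟩, hc _ (head!_mem c)⟩

theorem card_filter_forall_blocks_zero :
    #{c : Composition 0 | ∀ p ∈ c.blocks, P p} = 1 := by
  rw [filter_true_of_mem fun c _ => by simp [c.blocks_eq_nil.2 rfl], card_univ, composition_card,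
    pow_zero]

end Composition

theorem Finset.sum_Icc_filter_not_dvd {M : Type*} [AddCommMonoid M] {N n : ℕ} (hNn : N ≤ n)
    (f : ℕ → M) :
    ∑ k ∈ Icc 1 n with ¬ N ∣ k, f k =
      ∑ k ∈ Ico 1 N, f k + ∑ k ∈ Icc 1 (n - N) with ¬ N ∣ k, f (k + N) := by
  simp only [sum_filter]
  induction n, hNn using Nat.le_induction with
  | base =>
    rcases N.eq_zero_or_pos with rfl | hN
    · simp
    rw [← Ico_add_one_right_eq_Icc, sum_Ico_succ_top hN, if_neg (not_not_intro dvd_rfl), add_zero,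
      Nat.sub_self, Icc_eq_empty_of_lt zero_lt_one, sum_empty, add_zero]
    refine sum_congr rfl fun k hk => if_pos ?_
    exact Nat.not_dvd_of_pos_of_lt (mem_Ico.1 hk).1 (mem_Ico.1 hk).2
  | succ n hNn ih =>
    have hshift : n - N + 1 + N = n + 1 := by omega
    rw [sum_Icc_succ_top (by omega), ih, Nat.sub_add_comm hNn, sum_Icc_succ_top (by omega),
      add_assoc]
    simp only [← Nat.dvd_add_self_right (n := n - N + 1), hshift]

theorem aComp_eq_sum {N n : ℕ} (hn : 0 < n) :
    aComp N n = ∑ k ∈ Icc 1 n with ¬ N ∣ k, aComp N (n - k) :=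
  Composition.card_filter_forall_blocks_eq_sum _ hn

/-- For `N ≥ 2`, the sequence `a_n` satisfies the generalized Fibonacci
recurrence `a_n = a_{n-1} + ⋯ + a_{n-N}` for `n > N`, with `a_0 = 1`. -/
theorem aComp_recurrence (N : ℕ) (hN : 2 ≤ N) :
    aComp N 0 = 1 ∧ ∀ n : ℕ, N < n → aComp N n = ∑ k ∈ Finset.Icc 1 N, aComp N (n - k) := by
  refine ⟨Composition.card_filter_forall_blocks_zero _, fun n hn => ?_⟩
  have hshift : ∑ k ∈ Icc 1 (n - N) with ¬ N ∣ k, aComp N (n - (k + N)) = aComp N (n - N) := by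
    rw [aComp_eq_sum (Nat.sub_pos_of_lt hn)]
    simp only [add_comm _ N, Nat.sub_add_eq]
  rw [aComp_eq_sum (by omega), sum_Icc_filter_not_dvd hn.le, hshift,
    ← Ico_add_one_right_eq_Icc, sum_Ico_succ_top (by omega)]
end

section
/- Let pi_N: Sym -> Sym be the linear map defined on the basis S^I by pi_N(S^I) = Sigma_I^{(N)} if I lies in G^{(N)} (all parts in [1,N], last part in [1,N-1]) and pi_N(S^I) = 0 otherwise. Then for all compositions I in G^{(N)} and all compositions J, pi_N(S^I * S^J) = pi_N(S^I) * pi_N(S^J). -/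
open scoped Classical

noncomputable section

/-- The algebra of noncommutative symmetric functions, realized as the free
associative algebra over `ℂ` on generators `S_1, S_2, …` (indexed by `ℕ`,
the index `0` being unused). -/
abbrev NSym : Type := FreeAlgebra ℂ ℕ

/-- The complete noncommutative symmetric function `S_n`, with `S_0 = 1`. -/
def Sg (n : ℕ) : NSym := if n = 0 then 1 else FreeAlgebra.ι ℂ n

/-- `S^I = S_{i_1} ⋯ S_{i_r}` for a composition `I` (a list of parts). -/
def SWord (I : List ℕ) : NSym := (I.map Sg).prod

/-- The list of all coarsenings of a composition (obtained by merging
adjacent blocks). -/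
def coarse : List ℕ → List (List ℕ)
  | [] => [[]]
  | [a] => [[a]]
  | a :: b :: l => ((coarse (b :: l)).map (fun K => a :: K)) ++ coarse ((a + b) :: l)
termination_by l => l.length
decreasing_by all_goals simp

/-- The noncommutative ribbon Schur function
`R_I = ∑_{J ⪯ I} (-1)^{ℓ(I) - ℓ(J)} S^J`, the sum ranging over all
coarsenings `J` of `I`. -/
def Rib (I : List ℕ) : NSym :=
  ((coarse I).map (fun J => ((-1 : ℂ) ^ (I.length - J.length)) • SWord J)).sum

/-- One elementary step of the order `≤_{P^{(N)}}`: replace one part `m + k`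
by the pair `(m, k)` with `m ∈ [1, N-1]` and `k ≥ 1`. -/
def splitStep (N : ℕ) (I J : List ℕ) : Prop :=
  ∃ (L R : List ℕ) (m k : ℕ), 1 ≤ m ∧ m ≤ N - 1 ∧ 1 ≤ k ∧
    I = L ++ (m + k) :: R ∧ J = L ++ m :: k :: R

/-- `peakLE N J I` means `J ≤_{P^{(N)}} I`, i.e. `I` can be obtained from `J`
by successively splitting parts `i` into `(m, i - m)` with `m ∈ [1, N-1]`. -/
def peakLE (N : ℕ) (J I : List ℕ) : Prop :=
  Relation.ReflTransGen (splitStep N) J I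

/-- The complete peak function of order `N`:
`Σ^{(N)}_I = ∑_{J ≤_{P^{(N)}} I} R_J`. (Every `J ≤_{P^{(N)}} I` is a
coarsening of `I`, so the sum may be taken over coarsenings of `I`.) -/
def SigmaP (N : ℕ) (I : List ℕ) : NSym :=
  ((coarse I).map (fun J => if peakLE N J I then Rib J else 0)).sum

/-- Membership in `G^{(N)}`: all parts lie in `[1, N]` and the last part lies
in `[1, N-1]`. -/
def memG (N : ℕ) (I : List ℕ) : Prop :=
  (∀ p ∈ I, 1 ≤ p ∧ p ≤ N) ∧ (∀ p, I.getLast? = some p → p ≤ N - 1)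

end

/-! The order `≤_{P^{(N)}}` only ever merges a block into its successor across a boundary that
follows a part `≤ N - 1`, and these boundaries can be deleted independently; so the peak coarsenings
of `I` are enumerated by the recursion that builds `coarse I` with the forbidden merges left out
(`peakList`). Expanding the first ribbon with `S_a R_K = R_{a·K} + R_{a⊙K}` gives a recursion for
`Σ^{(N)}` along the first part which, at a boundary after a part `≤ N - 1`, splits off `Σ^{(N)}` of
the remaining parts. This is `Σ^{(N)}_{I·J} = Σ^{(N)}_I Σ^{(N)}_J`, and the statement about `π_N`
follows from the two membership facts on `G^{(N)}`. -/

lemma SWord_cons (a : ℕ) (l : List ℕ) : SWord (a :: l) = Sg a * SWord l := by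
  simp [SWord]

lemma SWord_append (I J : List ℕ) : SWord (I ++ J) = SWord I * SWord J := by
  simp [SWord]

lemma coarse_cons_cons (a b : ℕ) (l : List ℕ) :
    coarse (a :: b :: l) = (coarse (b :: l)).map (a :: ·) ++ coarse ((a + b) :: l) := by
  rw [coarse]

lemma coarse_modifyHead (a : ℕ) : ∀ K : List ℕ,
    coarse (K.modifyHead (a + ·)) = (coarse K).map (·.modifyHead (a + ·))
  | [] => by simp [coarse]
  | [b] => by simp [coarse]
  | b :: c :: l => by
    have ih := coarse_modifyHead a ((b + c) :: l)
    simp only [List.modifyHead_cons, ← add_assoc] at ih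
    simp [coarse_cons_cons, ih, Function.comp_def]

lemma coarse_cons (a : ℕ) {K : List ℕ} (hK : K ≠ []) :
    coarse (a :: K) = (coarse K).map (a :: ·) ++ (coarse K).map (·.modifyHead (a + ·)) := by
  obtain ⟨b, l, rfl⟩ := List.exists_cons_of_ne_nil hK
  rw [coarse_cons_cons, ← coarse_modifyHead, List.modifyHead_cons]

lemma exists_eq_cons_of_mem_coarse {b : ℕ} {l K : List ℕ} (hK : K ∈ coarse (b :: l)) :
    ∃ d K', K = (b + d) :: K' := by
  induction l generalizing b K with
  | nil => simp [coarse] at hK; exact ⟨0, [], by simp [hK]⟩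
  | cons c l ih =>
    rw [coarse_cons_cons] at hK
    rcases List.mem_append.1 hK with hK | hK
    · obtain ⟨K', -, rfl⟩ := List.mem_map.1 hK
      exact ⟨0, K', rfl⟩
    · obtain ⟨d, K', rfl⟩ := ih hK
      exact ⟨c + d, K', by rw [add_assoc]⟩

lemma length_le_of_mem_coarse : ∀ {I K : List ℕ}, K ∈ coarse I → K.length ≤ I.length
  | [], K, h | [_], K, h => by simp [coarse] at h; simp [h]
  | a :: b :: l, K, h => by
    rw [coarse_cons_cons] at h
    rcases List.mem_append.1 h with h | h
    · obtain ⟨K', hK', rfl⟩ := List.mem_map.1 h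
      simpa using length_le_of_mem_coarse hK'
    · have := length_le_of_mem_coarse h
      simp only [List.length_cons] at this ⊢
      omega

lemma nodup_coarse : ∀ {I : List ℕ}, (∀ x ∈ I, 0 < x) → (coarse I).Nodup
  | [], _ | [_], _ => by simp [coarse]
  | a :: b :: l, hI => by
    have hC := nodup_coarse (I := b :: l) fun x hx => hI x (List.mem_cons_of_mem a hx)
    have hb : 0 < b := hI b (by simp)
    rw [coarse_cons a (List.cons_ne_nil b l), List.nodup_append]
    refine ⟨hC.map List.cons_injective, hC.map fun K K' h => ?_, ?_⟩
    · cases K <;> cases K' <;> simp_all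
    · rintro _ hJ _ hJ' rfl
      obtain ⟨K, -, rfl⟩ := List.mem_map.1 hJ
      obtain ⟨K', hK', hEq⟩ := List.mem_map.1 hJ'
      obtain ⟨d, K'', rfl⟩ := exists_eq_cons_of_mem_coarse hK'
      simp only [List.modifyHead_cons, List.cons.injEq] at hEq
      omega

lemma Rib_cons_add_Rib_modifyHead (a : ℕ) {K : List ℕ} (hK : K ≠ []) :
    Rib (a :: K) + Rib (K.modifyHead (a + ·)) = Sg a * Rib K := by
  have hsign : ∀ J ∈ coarse K,
      ((-1 : ℂ) ^ (K.length + 1 - J.length) + (-1) ^ (K.length - J.length)) = 0 := by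
    intro J hJ
    rw [Nat.sub_add_comm (length_le_of_mem_coarse hJ), pow_succ]
    ring
  simp only [Rib, coarse_cons a hK, coarse_modifyHead, List.map_append, List.map_map,
    List.sum_append, List.length_modifyHead, add_assoc, ← List.sum_map_add, Function.comp_def,
    ← add_smul, ← List.sum_map_mul_left, SWord_cons, List.length_cons, Nat.add_sub_add_right,
    mul_smul_comm]
  exact congrArg List.sum <| List.map_congr_left fun J hJ => by rw [hsign J hJ, zero_smul, add_zero]

def peakList (N : ℕ) : List ℕ → List (List ℕ)
  | [] => [[]]
  | [a] => [[a]]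
  | a :: b :: l => (peakList N (b :: l)).map (a :: ·) ++
      if a ≤ N - 1 then (peakList N (b :: l)).map (·.modifyHead (a + ·)) else []

section peakList

variable {N : ℕ}

lemma peakList_sublist_coarse : ∀ I : List ℕ, (peakList N I).Sublist (coarse I)
  | [] | [_] => by simp [peakList, coarse]
  | a :: b :: l => by
    have ih := peakList_sublist_coarse (b :: l)
    rw [peakList, coarse_cons a (List.cons_ne_nil b l)]
    refine (ih.map _).append ?_
    split_ifs
    · exact ih.map _
    · exact List.nil_sublist _

lemma self_mem_peakList : ∀ I : List ℕ, I ∈ peakList N I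
  | [] | [_] => by simp [peakList]
  | a :: b :: l => by
    rw [peakList]
    exact List.mem_append_left _ (List.mem_map_of_mem (self_mem_peakList (b :: l)))

lemma merge_mem_peakList : ∀ {I L R : List ℕ} {m k : ℕ}, m ≤ N - 1 →
    L ++ m :: k :: R ∈ peakList N I → L ++ (m + k) :: R ∈ peakList N I
  | [], L, R, m, k, _, h | [_], L, R, m, k, _, h => by
    have := congrArg List.length (List.mem_singleton.1 (by simpa only [peakList] using h))
    simp at this <;> omega
  | a :: b :: l, L, R, m, k, hm, h => by
    rw [peakList] at h ⊢
    rcases List.mem_append.1 h with h | h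
    · obtain ⟨K, hK, hEq⟩ := List.mem_map.1 h
      rcases L with _ | ⟨x, L⟩
      · obtain ⟨rfl, rfl⟩ := List.cons_eq_cons.1 hEq
        rw [if_pos hm]
        exact List.mem_append_right _ (List.mem_map.2 ⟨k :: R, hK, rfl⟩)
      · obtain ⟨rfl, rfl⟩ := List.cons_eq_cons.1 hEq
        exact List.mem_append_left _ (List.mem_map_of_mem (merge_mem_peakList hm hK))
    · split_ifs at h ⊢ with ha
      · obtain ⟨K, hK, hEq⟩ := List.mem_map.1 h
        rcases K with _ | ⟨y, K⟩
        · simp at hEq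
        rw [List.modifyHead_cons] at hEq
        rcases L with _ | ⟨x, L⟩
        · obtain ⟨rfl, rfl⟩ := List.cons_eq_cons.1 hEq
          -- the block `a + y` ends with the block `y ≤ a + y`, so merging `y` with `k` is allowed
          have := merge_mem_peakList (L := []) (by omega) hK
          exact List.mem_append_right _ (List.mem_map.2 ⟨_, this, by simp [add_assoc]⟩)
        · obtain ⟨rfl, rfl⟩ := List.cons_eq_cons.1 hEq
          have := merge_mem_peakList (L := y :: L) hm hK
          exact List.mem_append_right _ (List.mem_map.2 ⟨_, this, rfl⟩)
      · simp at h

lemma splitStep_cons {A B : List ℕ} (x : ℕ) (h : splitStep N A B) :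
    splitStep N (x :: A) (x :: B) := by
  obtain ⟨L, R, m, k, hm, hmN, hk, rfl, rfl⟩ := h
  exact ⟨x :: L, R, m, k, hm, hmN, hk, rfl, rfl⟩

lemma peakLE_cons {A B : List ℕ} (x : ℕ) (h : peakLE N A B) : peakLE N (x :: A) (x :: B) :=
  Relation.ReflTransGen.lift (x :: ·) (fun _ _ => splitStep_cons x) _ _ h

lemma mem_peakList_of_peakLE {I J : List ℕ} (h : peakLE N J I) : J ∈ peakList N I := by
  induction h using Relation.ReflTransGen.head_induction_on with
  | refl => exact self_mem_peakList I
  | head hstep _ ih =>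
    obtain ⟨L, R, m, k, -, hm, -, rfl, rfl⟩ := hstep
    exact merge_mem_peakList hm ih

lemma peakLE_of_mem_peakList : ∀ {I J : List ℕ}, (∀ x ∈ I, 0 < x) →
    J ∈ peakList N I → peakLE N J I
  | [], J, _, h | [_], J, _, h => by
    simp only [peakList, List.mem_singleton] at h
    exact h ▸ Relation.ReflTransGen.refl
  | a :: b :: l, J, hI, h => by
    have hbl : ∀ x ∈ b :: l, 0 < x := fun x hx => hI x (List.mem_cons_of_mem a hx)
    rw [peakList] at h
    rcases List.mem_append.1 h with h | h
    · obtain ⟨K, hK, rfl⟩ := List.mem_map.1 h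
      exact peakLE_cons a (peakLE_of_mem_peakList hbl hK)
    · split_ifs at h with ha
      · obtain ⟨K, hK, rfl⟩ := List.mem_map.1 h
        obtain ⟨d, K', rfl⟩ :=
          exists_eq_cons_of_mem_coarse ((peakList_sublist_coarse (b :: l)).subset hK)
        have hsplit : splitStep N ((a + (b + d)) :: K') (a :: (b + d) :: K') :=
          ⟨[], K', a, b + d, hI a (by simp), ha, by have := hbl b (by simp); omega, rfl, rfl⟩
        exact .head hsplit (peakLE_cons a (peakLE_of_mem_peakList hbl hK))
      · simp at h

lemma peakLE_iff_mem_peakList {I J : List ℕ} (hI : ∀ x ∈ I, 0 < x) :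
    peakLE N J I ↔ J ∈ peakList N I :=
  ⟨mem_peakList_of_peakLE, peakLE_of_mem_peakList hI⟩

end peakList

lemma List.sum_map_ite_of_sublist {ι M : Type*} [AddCommMonoid M] {l₁ l₂ : List ι}
    (h : l₁.Sublist l₂) (hl₂ : l₂.Nodup) (p : ι → Prop) [DecidablePred p]
    (hp : ∀ x ∈ l₂, p x ↔ x ∈ l₁) (f : ι → M) :
    (l₂.map fun x => if p x then f x else 0).sum = (l₁.map f).sum := by
  rw [← List.sum_toFinset _ hl₂, ← List.sum_toFinset _ (hl₂.sublist h), ← Finset.sum_filter]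
  congr 1
  ext x
  simp only [Finset.mem_filter, List.mem_toFinset]
  exact ⟨fun hx => (hp x hx.1).1 hx.2, fun hx => ⟨h.subset hx, (hp x (h.subset hx)).2 hx⟩⟩

section SigmaP

variable {N : ℕ}

lemma SigmaP_eq_sum_peakList {I : List ℕ} (hI : ∀ x ∈ I, 0 < x) :
    SigmaP N I = ((peakList N I).map Rib).sum := by
  rw [SigmaP]
  exact List.sum_map_ite_of_sublist (peakList_sublist_coarse I) (nodup_coarse hI) _
    (fun _ _ => peakLE_iff_mem_peakList hI) Rib

/-- `Σ^{(N)}_I` with `a` added to the first part of every ribbon: the state carried by the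
recursion `peakSum_cons` along the first part. -/
noncomputable def peakSum (N a : ℕ) (I : List ℕ) : NSym :=
  ((peakList N I).map fun K => Rib (K.modifyHead (a + ·))).sum

lemma peakSum_zero (I : List ℕ) : peakSum N 0 I = ((peakList N I).map Rib).sum := by
  simp only [peakSum, zero_add]
  exact congrArg List.sum <| List.map_congr_left fun K _ => by cases K <;> rfl

lemma peakSum_nil (a : ℕ) : peakSum N a [] = 1 := by
  simp [peakSum, peakList, Rib, coarse, SWord]

lemma peakSum_singleton (a c : ℕ) : peakSum N a [c] = Sg (a + c) := by
  simp [peakSum, peakList, Rib, coarse, SWord]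

lemma peakSum_cons (a c : ℕ) {l : List ℕ} (hl : l ≠ []) :
    peakSum N a (c :: l) =
      Sg (a + c) * peakSum N 0 l - if c ≤ N - 1 then 0 else peakSum N (a + c) l := by
  have hne : ∀ K ∈ peakList N l, K ≠ [] := fun K hK => by
    obtain ⟨b, l, rfl⟩ := List.exists_cons_of_ne_nil hl
    obtain ⟨d, K', rfl⟩ := exists_eq_cons_of_mem_coarse ((peakList_sublist_coarse _).subset hK)
    exact List.cons_ne_nil _ _
  have hunmerged : ((peakList N l).map fun K => Rib ((a + c) :: K)).sum =
      Sg (a + c) * peakSum N 0 l - peakSum N (a + c) l := by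
    rw [peakSum_zero, ← List.sum_map_mul_left, peakSum, eq_sub_iff_add_eq, ← List.sum_map_add]
    exact congrArg List.sum <| List.map_congr_left fun K hK =>
      Rib_cons_add_Rib_modifyHead _ (hne K hK)
  obtain ⟨b, l, rfl⟩ := List.exists_cons_of_ne_nil hl
  rw [peakSum, peakList, List.map_append, List.sum_append, List.map_map]
  simp only [Function.comp_def, List.modifyHead_cons]
  rw [hunmerged]
  split_ifs
  · simp [peakSum, List.modifyHead_modifyHead, Function.comp_def, add_assoc]
  · simp

lemma peakSum_append_cons_cons (a : ℕ) (I : List ℕ) {c : ℕ} (hc : c ≤ N - 1) (d : ℕ)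
    (J : List ℕ) :
    peakSum N a (I ++ c :: d :: J) = peakSum N a (I ++ [c]) * peakSum N 0 (d :: J) := by
  induction I generalizing a with
  | nil => simp [peakSum_cons, hc, peakSum_singleton]
  | cons x I ih =>
    simp only [List.cons_append]
    rw [peakSum_cons _ _ (by simp), peakSum_cons _ _ (by simp), ih, ih, sub_mul, mul_assoc,
      ite_mul, zero_mul]

theorem SigmaP_append {I J : List ℕ} (hI : ∀ x ∈ I, 0 < x) (hJ : ∀ x ∈ J, 0 < x)
    (hlast : ∀ p, I.getLast? = some p → p ≤ N - 1) :
    SigmaP N (I ++ J) = SigmaP N I * SigmaP N J := by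
  rw [SigmaP_eq_sum_peakList (List.forall_mem_append.2 ⟨hI, hJ⟩), SigmaP_eq_sum_peakList hI,
    SigmaP_eq_sum_peakList hJ, ← peakSum_zero, ← peakSum_zero, ← peakSum_zero]
  rcases List.eq_nil_or_concat' I with rfl | ⟨I, c, rfl⟩
  · rw [List.nil_append, peakSum_nil, one_mul]
  rcases J with _ | ⟨d, J⟩
  · rw [List.append_nil, peakSum_nil, mul_one]
  rw [List.append_assoc, List.singleton_append]
  exact peakSum_append_cons_cons 0 I (hlast c List.getLast?_concat) d J

end SigmaP

lemma memG_nil (N : ℕ) : memG N [] := ⟨by simp, by simp⟩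

lemma memG.append {N : ℕ} {I J : List ℕ} (hI : memG N I) (hJ : memG N J) :
    memG N (I ++ J) := by
  refine ⟨List.forall_mem_append.2 ⟨hI.1, hJ.1⟩, fun p hp => ?_⟩
  rcases J.eq_nil_or_concat' with rfl | ⟨J, q, rfl⟩
  · exact hI.2 p (by simpa using hp)
  · exact hJ.2 p (by simpa using hp)

lemma memG.of_append_right {N : ℕ} {I J : List ℕ} (hJ : J ≠ []) (h : memG N (I ++ J)) :
    memG N J :=
  ⟨fun p hp => h.1 p (List.mem_append_right I hp),
    fun p hp => h.2 p (by rwa [List.getLast?_append_of_ne_nil I hJ])⟩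

theorem piN_multiplicative_general (N : ℕ) (π : NSym →ₗ[ℂ] NSym)
    (hπ : ∀ I : List ℕ, (∀ p ∈ I, 0 < p) →
      π (SWord I) = if memG N I then SigmaP N I else 0)
    (I J : List ℕ) (hI : memG N I)
    (hJpos : ∀ p ∈ J, 0 < p) :
    π (SWord I * SWord J) = π (SWord I) * π (SWord J) := by
  have hIpos : ∀ p ∈ I, 0 < p := fun p hp => (hI.1 p hp).1
  rw [← SWord_append, hπ _ (List.forall_mem_append.2 ⟨hIpos, hJpos⟩), hπ I hIpos, hπ J hJpos,
    if_pos hI]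
  by_cases hJ : memG N J
  · rw [if_pos hJ, if_pos (hI.append hJ), SigmaP_append hIpos hJpos hI.2]
  · have hJne : J ≠ [] := by
      rintro rfl
      exact hJ (memG_nil N)
    rw [if_neg hJ, if_neg fun h => hJ (h.of_append_right hJne), mul_zero]

/-- Let `π_N : Sym → Sym` be the linear map defined on the basis `S^I` by
`π_N(S^I) = Σ^{(N)}_I` if `I ∈ G^{(N)}` and `π_N(S^I) = 0` otherwise. Then for
every composition `I ∈ G^{(N)}` and every composition `J`,
`π_N(S^I S^J) = π_N(S^I) π_N(S^J)`. -/
theorem piN_multiplicative (N : ℕ) (hN : 1 ≤ N) (π : NSym →ₗ[ℂ] NSym)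
    (hπ : ∀ I : List ℕ, (∀ p ∈ I, 0 < p) →
      π (SWord I) = if memG N I then SigmaP N I else 0)
    (I J : List ℕ) (hI : memG N I)
    (hJpos : ∀ p ∈ J, 0 < p) :
    π (SWord I * SWord J) = π (SWord I) * π (SWord J) :=
  piN_multiplicative_general N π hπ I J hI hJpos
end
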